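/- If a rooted binary tree T = (T_a, T_b) minimizes Δ_CS = C - S among all rooted binary trees with n leaves, then T_a minimizes Δ_CS among rooted binary trees with n_a leaves and T_b minimizes Δ_CS among rooted binary trees with n_b leaves. -/

import Mathlib

/-- Rooted binary trees: a leaf, or an internal vertex with two child subtrees. -/
inductive BTree where
  | leaf : BTree
  | node : BTree → BTree → BTree
deriving DecidableEq

namespace BTree

/-- Number of leaves of a rooted binary tree. -/
def numLeaves : BTree → ℕ
  | leaf => 1
  | node l r => numLeaves l + numLeaves r

/-- Sackin index: sum over internal vertices `v` of `n_{v_a} + n_{v_b}`. -/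
def sackin : BTree → ℕ
  | leaf => 0
  | node l r => sackin l + sackin r + (numLeaves l + numLeaves r)

/-- Colless index: sum over internal vertices `v` of `|n_{v_a} - n_{v_b}|`. -/
def colless : BTree → ℕ
  | leaf => 0
  | node l r =>
      colless l + colless r +
        (max (numLeaves l) (numLeaves r) - min (numLeaves l) (numLeaves r))

/-- `N_a`: sum over internal vertices of the larger child-subtree leaf count. -/
def Na : BTree → ℕ
  | leaf => 0
  | node l r => Na l + Na r + max (numLeaves l) (numLeaves r)

/-- `N_b`: sum over internal vertices of the smaller child-subtree leaf count. -/
def Nb : BTree → ℕ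
  | leaf => 0
  | node l r => Nb l + Nb r + min (numLeaves l) (numLeaves r)

/-- `Δ_CS = C - S`, as an integer. -/
def deltaCS (T : BTree) : ℤ := (colless T : ℤ) - (sackin T : ℤ)

/-- Caterpillar trees: every internal vertex has at least one leaf child. -/
def isCaterpillar : BTree → Prop
  | leaf => True
  | node l r => (l = leaf ∧ isCaterpillar r) ∨ (r = leaf ∧ isCaterpillar l)

/-- The fully balanced tree of height `h`. -/
def fbTree : ℕ → BTree
  | 0 => leaf
  | h + 1 => node (fbTree h) (fbTree h)

end BTree

namespace BTree

theorem deltaCS_node (l r : BTree) :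
    deltaCS (node l r) = deltaCS l + deltaCS r - 2 * min (numLeaves l) (numLeaves r) := by
  have hminmax : (min (numLeaves l) (numLeaves r) : ℤ) + max (numLeaves l : ℤ) (numLeaves r) =
      numLeaves l + numLeaves r := min_add_max _ _
  simp only [deltaCS, colless, sackin]
  push_cast [min_le_max]
  linarith

theorem deltaCS_node_sub_deltaCS_node {l r l' r' : BTree} (hl : numLeaves l' = numLeaves l)
    (hr : numLeaves r' = numLeaves r) :
    deltaCS (node l' r') - deltaCS (node l r) =
      deltaCS l' - deltaCS l + (deltaCS r' - deltaCS r) := by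
  rw [deltaCS_node, deltaCS_node, hl, hr]
  ring

def IsDeltaCSMin (T : BTree) : Prop :=
  ∀ T' : BTree, numLeaves T' = numLeaves T → deltaCS T ≤ deltaCS T'

theorem IsDeltaCSMin.left {l r : BTree} (h : IsDeltaCSMin (node l r)) : IsDeltaCSMin l := by
  intro l' hl'
  have hnode := h (node l' r) (by simp only [numLeaves, hl'])
  have := deltaCS_node_sub_deltaCS_node hl' (rfl : numLeaves r = _)
  linarith

theorem IsDeltaCSMin.right {l r : BTree} (h : IsDeltaCSMin (node l r)) : IsDeltaCSMin r := by
  intro r' hr'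
  have hnode := h (node l r') (by simp only [numLeaves, hr'])
  have := deltaCS_node_sub_deltaCS_node (rfl : numLeaves l = _) hr'
  linarith

end BTree

open BTree in
/-- if `T = (T_a, T_b)` minimizes `Δ_CS` among trees with `n` leaves,
then `T_a` and `T_b` minimize `Δ_CS` among trees with `n_a`, resp. `n_b`, leaves. -/
theorem subtrees_of_deltaCS_min_are_min (Ta Tb : BTree)
    (h : ∀ T' : BTree, numLeaves T' = numLeaves (BTree.node Ta Tb) →
      deltaCS (BTree.node Ta Tb) ≤ deltaCS T') :
    (∀ T' : BTree, numLeaves T' = numLeaves Ta → deltaCS Ta ≤ deltaCS T') ∧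
    (∀ T' : BTree, numLeaves T' = numLeaves Tb → deltaCS Tb ≤ deltaCS T') :=
  ⟨IsDeltaCSMin.left h, IsDeltaCSMin.right h⟩
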